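/- With M(p,q) = exp(−(‖p‖²+‖q‖²)/(4kT)) and Q(f) = ζ∇_p·(pf + 2kT∇_p f) + ζ∇_q·(qf + 2kT∇_q f), the function a(p,q) = −(1/ζ) p M (componentwise) satisfies Q(a_i) = p_i M for each component i. -/

import Mathlib

/-!
Write `β = 2kT`. Since `∇_p M = -(M/β) p`, for any `f = h M` the drift and diffusion parts of the
`p`-flux combine into `p f + β ∇_p f = β M ∇_p h`: the Gaussian weight absorbs the drift, and
likewise in `q`. For `h = -(1/ζ) p_i` the `p`-flux is therefore `-(β/ζ) M e_i` and the `q`-flux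
vanishes, so `Q(a_i) = -β ∂_{p_i} M = p_i M`.
-/
noncomputable section
open scoped RealInnerProductSpace
open MeasureTheory

abbrev E (d : ℕ) := EuclideanSpace ℝ (Fin d)

variable {d : ℕ}

/-- Gradient in the `p`-variable. -/
def gradP (f : E d × E d → ℝ) (x : E d × E d) : E d :=
  gradient (fun p => f (p, x.2)) x.1

/-- Gradient in the `q`-variable. -/
def gradQ (f : E d × E d → ℝ) (x : E d × E d) : E d :=
  gradient (fun q => f (x.1, q)) x.2

/-- Divergence in the `p`-variable. -/
def divP (F : E d × E d → E d) (x : E d × E d) : ℝ :=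
  ∑ i, fderiv ℝ (fun p => F (p, x.2) i) x.1 (EuclideanSpace.single i 1)

/-- Divergence in the `q`-variable. -/
def divQ (F : E d × E d → E d) (x : E d × E d) : ℝ :=
  ∑ i, fderiv ℝ (fun q => F (x.1, q) i) x.2 (EuclideanSpace.single i 1)

/-- The Fokker–Planck collision operator
`Q(f) = ζ ∇_p·(p f + 2kT ∇_p f) + ζ ∇_q·(q f + 2kT ∇_q f)`. -/
def Qop (k T ζ : ℝ) (f : E d × E d → ℝ) (x : E d × E d) : ℝ :=
  ζ * divP (fun y => f y • y.1 + (2 * k * T) • gradP f y) x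
    + ζ * divQ (fun y => f y • y.2 + (2 * k * T) • gradQ f y) x

/-- The Gaussian equilibrium `M(p,q) = exp(−(‖p‖²+‖q‖²)/(4kT))`. -/
def Mfun (k T : ℝ) (x : E d × E d) : ℝ :=
  Real.exp (-(‖x.1‖ ^ 2 + ‖x.2‖ ^ 2) / (4 * k * T))

/-- The conservative form `2ζkT ∇_{p,q}·(M ∇_{p,q}(f/M))`. -/
def Qcons (k T ζ : ℝ) (f : E d × E d → ℝ) (x : E d × E d) : ℝ :=
  2 * ζ * k * T *
    (divP (fun y => Mfun k T y • gradP (fun z => f z / Mfun k T z) y) x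
      + divQ (fun y => Mfun k T y • gradQ (fun z => f z / Mfun k T z) y) x)

section Gaussian

open InnerProductSpace

variable {F : Type*} [NormedAddCommGroup F] [InnerProductSpace ℝ F] [CompleteSpace F]

theorem HasGradientAt.mul {f g : F → ℝ} {f' g' x : F} (hf : HasGradientAt f f' x)
    (hg : HasGradientAt g g' x) :
    HasGradientAt (fun v => f v * g v) (f x • g' + g x • f') x := by
  rw [hasGradientAt_iff_hasFDerivAt] at *
  refine (hf.fun_mul hg).congr_fderiv ?_
  ext v
  simp

theorem HasGradientAt.const_mul {f : F → ℝ} {f' x : F} (hf : HasGradientAt f f' x) (c : ℝ) :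
    HasGradientAt (fun v => c * f v) (c • f') x := by
  simpa using (hasGradientAt_const x c).mul hf

theorem hasGradientAt_exp_neg_normSq_add_div (s β : ℝ) (x : F) :
    HasGradientAt (fun v : F => Real.exp (-(‖v‖ ^ 2 + s) / (2 * β)))
      ((-(Real.exp (-(‖x‖ ^ 2 + s) / (2 * β)) / β)) • x) x := by
  rw [hasGradientAt_iff_hasFDerivAt]
  simp only [div_eq_mul_inv]
  refine (((hasStrictFDerivAt_norm_sq x).hasFDerivAt.add_const s).fun_neg.mul_const
    (2 * β)⁻¹).exp.congr_fderiv ?_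
  ext v
  simp only [neg_apply, smul_apply, coe_innerSL_apply, nsmul_eq_mul, Nat.cast_ofNat, smul_eq_mul,
    toDual_apply_apply, real_inner_smul_left]
  ring

theorem flux_mul_eq_of_hasGradientAt_gaussian {β : ℝ} (hβ : β ≠ 0) {W h : F → ℝ} {x h' : F}
    (hW : HasGradientAt W ((-(W x / β)) • x) x) (hh : HasGradientAt h h' x) :
    (h x * W x) • x + β • gradient (fun v => h v * W v) x = W x • β • h' := by
  rw [(hh.mul hW).gradient, smul_add, smul_smul, smul_smul, smul_smul]
  field_simp
  module

end Gaussian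

theorem EuclideanSpace.hasGradientAt_apply {ι : Type*} [Fintype ι] [DecidableEq ι] (i : ι)
    (x : EuclideanSpace ℝ ι) :
    HasGradientAt (fun v : EuclideanSpace ℝ ι => v i) (EuclideanSpace.single i 1) x := by
  rw [hasGradientAt_iff_hasFDerivAt]
  refine (EuclideanSpace.proj i : EuclideanSpace ℝ ι →L[ℝ] ℝ).hasFDerivAt.congr_fderiv ?_
  ext v
  simp [EuclideanSpace.inner_single_left]

theorem hasGradientAt_Mfun_fst (k T : ℝ) (x : E d × E d) :
    HasGradientAt (fun p => Mfun k T (p, x.2)) ((-(Mfun k T x / (2 * k * T))) • x.1) x.1 := by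
  simpa only [Mfun, show (4 : ℝ) * k * T = 2 * (2 * k * T) by ring] using
    hasGradientAt_exp_neg_normSq_add_div (‖x.2‖ ^ 2) (2 * k * T) x.1

theorem hasGradientAt_Mfun_snd (k T : ℝ) (x : E d × E d) :
    HasGradientAt (fun q => Mfun k T (x.1, q)) ((-(Mfun k T x / (2 * k * T))) • x.2) x.2 := by
  simpa only [Mfun, add_comm (‖x.1‖ ^ 2), show (4 : ℝ) * k * T = 2 * (2 * k * T) by ring] using
    hasGradientAt_exp_neg_normSq_add_div (‖x.1‖ ^ 2) (2 * k * T) x.2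

theorem divP_smul_const {g : E d × E d → ℝ} {x : E d × E d} {g' : E d}
    (hg : HasGradientAt (fun p => g (p, x.2)) g' x.1) (v : E d) :
    divP (fun y => g y • v) x = ⟪g', v⟫ := by
  simp only [divP, PiLp.smul_apply, smul_eq_mul, fderiv_mul_const hg.differentiableAt,
    _root_.smul_apply, hg.fderiv_apply, EuclideanSpace.inner_single_right]
  simp [PiLp.inner_apply, mul_comm]

theorem divQ_zero (x : E d × E d) : divQ (fun _ => (0 : E d)) x = 0 := by
  simp [divQ]

theorem stmt15 (k T ζ : ℝ) (hk : 0 < k) (hT : 0 < T) (hζ : 0 < ζ)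
    (i : Fin d) (x : E d × E d) :
    Qop k T ζ (fun y => -(1 / ζ) * y.1 i * Mfun k T y) x = x.1 i * Mfun k T x := by
  have hβ : 2 * k * T ≠ 0 := by positivity
  have fluxP : (fun y : E d × E d => (-(1 / ζ) * y.1 i * Mfun k T y) • y.1 +
      (2 * k * T) • gradP (fun y => -(1 / ζ) * y.1 i * Mfun k T y) y) =
      fun y => Mfun k T y • (2 * k * T) • (-(1 / ζ)) • EuclideanSpace.single i 1 :=
    funext fun y => flux_mul_eq_of_hasGradientAt_gaussian hβ (hasGradientAt_Mfun_fst k T y)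
      ((EuclideanSpace.hasGradientAt_apply i y.1).const_mul _)
  have fluxQ : (fun y : E d × E d => (-(1 / ζ) * y.1 i * Mfun k T y) • y.2 +
      (2 * k * T) • gradQ (fun y => -(1 / ζ) * y.1 i * Mfun k T y) y) = fun _ => 0 :=
    funext fun y => (flux_mul_eq_of_hasGradientAt_gaussian (h := fun _ => -(1 / ζ) * y.1 i) hβ
      (hasGradientAt_Mfun_snd k T y) (hasGradientAt_const y.2 _)).trans (by simp)
  rw [Qop, fluxP, fluxQ, divQ_zero, divP_smul_const (hasGradientAt_Mfun_fst k T x)]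
  simp only [real_inner_smul_right, EuclideanSpace.inner_single_right, conj_trivial,
    PiLp.smul_apply, smul_eq_mul, mul_zero, add_zero]
  field_simp
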